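/- Let E be a finite-dimensional real inner product space, X ⊆ E, and x ∈ X. Suppose X is Clarke regular at x, i.e., for every sequence (x_k) in X converging to x one has T_xX ⊆ liminf_k T_{x_k}X. Then x is not apocalyptic: for every sequence (x_k) in X converging to x and every continuously differentiable f : E → ℝ, if s(−∇f(x_k), T_{x_k}X) → 0 then s(−∇f(x), T_xX) = 0. -/

import Mathlib

open Filter Topology

/-- The Bouligand tangent cone of `X ⊆ E` at `x`. -/
def bTangentCone {E : Type*} [NormedAddCommGroup E] [NormedSpace ℝ E]
    (X : Set E) (x : E) : Set E :=
  {v | ∃ (xk : ℕ → E) (τ : ℕ → ℝ), (∀ k, xk k ∈ X) ∧ (∀ k, 0 < τ k) ∧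
    Tendsto τ atTop (𝓝 0) ∧ Tendsto (fun k => (τ k)⁻¹ • (xk k - x)) atTop (𝓝 v)}

/-- The polar of a set `K ⊆ E`: `K° = {w : ⟪w, z⟫ ≤ 0 for all z ∈ K}`. -/
def polarCone {E : Type*} [NormedAddCommGroup E] [InnerProductSpace ℝ E] (K : Set E) : Set E :=
  {w | ∀ z ∈ K, (inner ℝ w z : ℝ) ≤ 0}

/-- The stationarity measure `s(v, K) = max(0, sup{⟪v, z⟫ : z ∈ K, ‖z‖ = 1})`; note that on `ℝ`,
Lean's `sSup` of the empty set is `0`, matching the convention `sup ∅ = 0`. -/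
noncomputable def statMeasure {E : Type*} [NormedAddCommGroup E] [InnerProductSpace ℝ E]
    (v : E) (K : Set E) : ℝ :=
  max 0 (sSup {t : ℝ | ∃ z ∈ K, ‖z‖ = 1 ∧ (inner ℝ v z : ℝ) = t})

/-- The outer limit `limsup_k S_k`: points `u` for which there are a strictly increasing sequence
of indices `(k_i)` and points `u_i ∈ S_{k_i}` with `u_i → u`. -/
def outerLimit {E : Type*} [NormedAddCommGroup E] (S : ℕ → Set E) : Set E :=
  {u | ∃ φ : ℕ → ℕ, StrictMono φ ∧
    ∃ uk : ℕ → E, (∀ i, uk i ∈ S (φ i)) ∧ Tendsto uk atTop (𝓝 u)}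

/-- The inner limit `liminf_k S_k`: points `u` for which there exist `u_k ∈ S_k` with `u_k → u`. -/
def innerLimit {E : Type*} [NormedAddCommGroup E] (S : ℕ → Set E) : Set E :=
  {u | ∃ uk : ℕ → E, (∀ k, uk k ∈ S k) ∧ Tendsto uk atTop (𝓝 u)}

/-!
Clarke regularity approximates every tangent direction `z` at `x` by tangent directions `z_k`
at `x_k`. On a cone, `⟪v, z_k⟫ ≤ s(v, K) ‖z_k‖`, so `⟪-∇f(x_k), z_k⟫` is bounded by a sequence
tending to `0`; by continuity of `∇f` the limit gives `⟪-∇f(x), z⟫ ≤ 0` for every unit tangent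
direction `z`, i.e. `s(-∇f(x), T_xX) = 0`.
-/

theorem smul_mem_bTangentCone {E : Type*} [NormedAddCommGroup E] [NormedSpace ℝ E]
    {X : Set E} {x z : E} {c : ℝ} (hc : 0 < c) (hz : z ∈ bTangentCone X x) :
    c • z ∈ bTangentCone X x := by
  obtain ⟨xk, τ, hxk, hτ, hτ0, hlim⟩ := hz
  refine ⟨xk, fun k => τ k / c, hxk, fun k => div_pos (hτ k) hc, by simpa using hτ0.div_const c, ?_⟩
  have hrescale : (fun k => (τ k / c)⁻¹ • (xk k - x)) = fun k => c • ((τ k)⁻¹ • (xk k - x)) := by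
    funext k
    rw [smul_smul, div_eq_mul_inv, mul_inv, inv_inv, mul_comm]
  rw [hrescale]
  exact hlim.const_smul c

theorem ContDiff.continuous_gradient {E : Type*} [NormedAddCommGroup E] [InnerProductSpace ℝ E]
    [CompleteSpace E] {f : E → ℝ} {n : WithTop ℕ∞} (hf : ContDiff ℝ n f) (hn : n ≠ 0) :
    Continuous (gradient f) :=
  (InnerProductSpace.toDual ℝ E).symm.continuous.comp (hf.continuous_fderiv hn)

section StatMeasure

variable {E : Type*} [NormedAddCommGroup E] [InnerProductSpace ℝ E]

theorem inner_le_statMeasure {v z : E} {K : Set E} (hz : z ∈ K) (hz1 : ‖z‖ = 1) :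
    inner ℝ v z ≤ statMeasure v K := by
  have hbdd : BddAbove {t : ℝ | ∃ z ∈ K, ‖z‖ = 1 ∧ inner ℝ v z = t} := by
    refine ⟨‖v‖, ?_⟩
    rintro t ⟨z, -, hz1, rfl⟩
    simpa [hz1] using real_inner_le_norm v z
  exact le_max_of_le_right (le_csSup hbdd ⟨z, hz, hz1, rfl⟩)

theorem inner_le_statMeasure_mul_norm {v z : E} {K : Set E}
    (hK : ∀ c : ℝ, 0 < c → ∀ w ∈ K, c • w ∈ K) (hz : z ∈ K) :
    inner ℝ v z ≤ statMeasure v K * ‖z‖ := by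
  rcases eq_or_ne z 0 with rfl | hz0
  · simp
  have hnorm : 0 < ‖z‖ := norm_pos_iff.2 hz0
  have hunit : ‖(‖z‖⁻¹ • z)‖ = 1 := by
    rw [norm_smul, norm_inv, norm_norm, inv_mul_cancel₀ hnorm.ne']
  calc inner ℝ v z = ‖z‖ * inner ℝ v (‖z‖⁻¹ • z) := by
        rw [real_inner_smul_right, mul_inv_cancel_left₀ hnorm.ne']
    _ ≤ ‖z‖ * statMeasure v K := by
        gcongr
        exact inner_le_statMeasure (hK _ (inv_pos.2 hnorm) z hz) hunit
    _ = statMeasure v K * ‖z‖ := mul_comm _ _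

theorem inner_nonpos_of_tendsto_statMeasure {K : ℕ → Set E}
    (hK : ∀ k, ∀ c : ℝ, 0 < c → ∀ w ∈ K k, c • w ∈ K k)
    {v z : ℕ → E} {v₀ z₀ : E} (hv : Tendsto v atTop (𝓝 v₀)) (hz : Tendsto z atTop (𝓝 z₀))
    (hzK : ∀ k, z k ∈ K k) (hs : Tendsto (fun k => statMeasure (v k) (K k)) atTop (𝓝 0)) :
    inner ℝ v₀ z₀ ≤ 0 := by
  have hbound : Tendsto (fun k => statMeasure (v k) (K k) * ‖z k‖) atTop (𝓝 0) := by
    simpa using hs.mul hz.norm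
  exact le_of_tendsto_of_tendsto (hv.inner hz) hbound
    (Eventually.of_forall fun k => inner_le_statMeasure_mul_norm (hK k) (hzK k))

theorem statMeasure_eq_zero_of_forall_inner_nonpos {v : E} {K : Set E}
    (h : ∀ z ∈ K, ‖z‖ = 1 → inner ℝ v z ≤ 0) : statMeasure v K = 0 :=
  max_eq_left <| Real.sSup_nonpos fun _ ⟨z, hz, hz1, ht⟩ => ht ▸ h z hz hz1

end StatMeasure

theorem stmt11_general {E : Type*} [NormedAddCommGroup E] [InnerProductSpace ℝ E] [FiniteDimensional ℝ E]
    (X : Set E) (x : E)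
    (hreg : ∀ xk : ℕ → E, (∀ k, xk k ∈ X) → Tendsto xk atTop (𝓝 x) →
      bTangentCone X x ⊆ innerLimit fun k => bTangentCone X (xk k)) :
    ∀ (xk : ℕ → E) (f : E → ℝ), (∀ k, xk k ∈ X) → Tendsto xk atTop (𝓝 x) →
      ContDiff ℝ 1 f →
      Tendsto (fun k => statMeasure (-gradient f (xk k)) (bTangentCone X (xk k))) atTop (𝓝 0) →
      statMeasure (-gradient f x) (bTangentCone X x) = 0 := by
  intro xk f hxkX hxkx hf hstat
  have hgrad : Tendsto (fun k => -gradient f (xk k)) atTop (𝓝 (-gradient f x)) :=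
    (((hf.continuous_gradient one_ne_zero).tendsto x).comp hxkx).neg
  refine statMeasure_eq_zero_of_forall_inner_nonpos fun z hz _ => ?_
  obtain ⟨zk, hzk, hzkz⟩ := hreg xk hxkX hxkx hz
  exact inner_nonpos_of_tendsto_statMeasure (fun _ _ hc _ => smul_mem_bTangentCone hc)
    hgrad hzkz hzk hstat

/-- Let `E` be a finite-dimensional real inner product space, `X ⊆ E`, `x ∈ X`.
Suppose `X` is Clarke regular at `x`: for every sequence `(x_k)` in `X` converging to `x`,
`T_xX ⊆ liminf_k T_{x_k}X`. Then `x` is not apocalyptic: for every sequence `(x_k)` in `X`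
converging to `x` and every continuously differentiable `f : E → ℝ`, if
`s(−∇f(x_k), T_{x_k}X) → 0` then `s(−∇f(x), T_xX) = 0`. -/
theorem stmt11 {E : Type*} [NormedAddCommGroup E] [InnerProductSpace ℝ E] [FiniteDimensional ℝ E]
    (X : Set E) (x : E) (hx : x ∈ X)
    (hreg : ∀ xk : ℕ → E, (∀ k, xk k ∈ X) → Tendsto xk atTop (𝓝 x) →
      bTangentCone X x ⊆ innerLimit fun k => bTangentCone X (xk k)) :
    ∀ (xk : ℕ → E) (f : E → ℝ), (∀ k, xk k ∈ X) → Tendsto xk atTop (𝓝 x) →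
      ContDiff ℝ 1 f →
      Tendsto (fun k => statMeasure (-gradient f (xk k)) (bTangentCone X (xk k))) atTop (𝓝 0) →
      statMeasure (-gradient f x) (bTangentCone X x) = 0 :=
  stmt11_general X x hreg
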